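/- Pathwise monotonicity of the Shiryaev filter in the observation path: let l > 0, σ > 0, ρ > 0 and π̃ ∈ [0,1]. Let y¹, y²: [0,∞) → ℝ be continuous with y¹(0) = y²(0) = 0 and such that t ↦ y²(t) − y¹(t) is nondecreasing. Then g_{l,ρ}(t,π̃,y¹) ≤ g_{l,ρ}(t,π̃,y²) for all t ≥ 0; moreover, if y¹ = y² on an interval [0,s], then g_{l,ρ}(t,π̃,y¹) = g_{l,ρ}(t,π̃,y²) for all t ∈ [0,s]. -/

import Mathlib

open MeasureTheory ProbabilityTheory Real Set
open scoped ENNReal NNReal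

noncomputable section

namespace QD

variable {Ω : Type*}

/-- The signal process `X_t = B⁰·1_{Θ=0} + B¹·1_{0<Θ≤t}`. -/
def signal (Θ B0 B1 : Ω → ℝ) (t : ℝ) (ω : Ω) : ℝ :=
  (if Θ ω = 0 then B0 ω else 0) + (if 0 < Θ ω ∧ Θ ω ≤ t then B1 ω else 0)

/-- The observation process `Y_t = ∫_0^t X_u du + M_t`. -/
def obs (Θ B0 B1 : Ω → ℝ) (M : ℝ → Ω → ℝ) (t : ℝ) (ω : Ω) : ℝ :=
  (∫ u in (0:ℝ)..t, signal Θ B0 B1 u ω) + M t ω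

/-- The natural filtration `F^Y` of a process `Y` (time index `[0,∞)`). -/
def natFilt (Y : ℝ → Ω → ℝ) (t : ℝ) : MeasurableSpace Ω :=
  ⨆ s ∈ Set.Icc (0:ℝ) t, MeasurableSpace.comap (Y s) Real.measurableSpace

/-- `τ` is a (nonnegative, finite-valued) stopping time of the natural filtration of `Y`. -/
def IsStopTime (Y : ℝ → Ω → ℝ) (τ : Ω → ℝ) : Prop :=
  (∀ ω, 0 ≤ τ ω) ∧ ∀ t : ℝ, MeasurableSet[natFilt Y t] {ω | τ ω ≤ t}

/-- The σ-algebra `F^Y_τ` at a stopping time `τ`. -/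
def stopSigma (F : ℝ → MeasurableSpace Ω) (τ : Ω → ℝ) : MeasurableSpace Ω :=
  MeasurableSpace.generateFrom {A | ∀ t : ℝ, MeasurableSet[F t] (A ∩ {ω | τ ω ≤ t})}

/-- Bayes risk with a time-dependent delay cost `c`:
`R(τ) = P(τ < Θ) + E[1_{Θ≤τ} ∫_Θ^τ c(u) du]`. -/
def risk [MeasurableSpace Ω] (P : Measure Ω) (Θ : Ω → ℝ) (c : ℝ → ℝ) (τ : Ω → ℝ) : ℝ :=
  (P {ω | τ ω < Θ ω}).toReal + ∫ ω, (if Θ ω ≤ τ ω then ∫ u in Θ ω..τ ω, c u else 0) ∂P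

/-- Bayes risk with constant delay cost `c`: `R(τ) = P(τ < Θ) + c·E[(τ-Θ)⁺]`. -/
def riskC [MeasurableSpace Ω] (P : Measure Ω) (Θ : Ω → ℝ) (c : ℝ) (τ : Ω → ℝ) : ℝ :=
  (P {ω | τ ω < Θ ω}).toReal + c * ∫ ω, max (τ ω - Θ ω) 0 ∂P

/-- Value of the detection problem with constant cost: infimum of the Bayes risk over
all stopping times of the natural filtration of the observation `Y`. -/
def value [MeasurableSpace Ω] (P : Measure Ω) (Θ : Ω → ℝ) (c : ℝ) (Y : ℝ → Ω → ℝ) : ℝ :=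
  sInf (riskC P Θ c '' {τ | IsStopTime Y τ})

/-- The exponential distribution with rate `ρ` (density `ρ e^{-ρθ}` on `(0,∞)`). -/
def expMeasure (ρ : ℝ) : Measure ℝ :=
  volume.withDensity ((Set.Ioi (0:ℝ)).indicator fun x => ENNReal.ofReal (ρ * Real.exp (-ρ * x)))

/-- Numerator `N(t)` of the Shiryaev filter for drift `m`, volatility `σv`, rate `ρ`,
initial mass `pit` and observation path `y`. -/
def filterN (m σv ρ pit : ℝ) (y : ℝ → ℝ) (t : ℝ) : ℝ :=
  pit * Real.exp (m / σv ^ 2 * y t - m ^ 2 / (2 * σv ^ 2) * t) +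
    (1 - pit) * ∫ θ in (0:ℝ)..t,
      Real.exp (m / σv ^ 2 * (y t - y θ) - m ^ 2 / (2 * σv ^ 2) * (t - θ)) *
        (ρ * Real.exp (-ρ * θ))

/-- The Shiryaev filter `g_{m,ρ}(t, pit, y) = N(t)/(N(t) + (1-pit)e^{-ρt})`. -/
def filter (m σv ρ pit : ℝ) (y : ℝ → ℝ) (t : ℝ) : ℝ :=
  filterN m σv ρ pit y t / (filterN m σv ρ pit y t + (1 - pit) * Real.exp (-ρ * t))

/-- First time (≥ 0) the function `f` reaches the level `a`. -/
def hit (f : ℝ → ℝ) (a : ℝ) : ℝ :=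
  sInf {t : ℝ | 0 ≤ t ∧ a ≤ f t}

/-- The observation process in the classical (one-point drift) model:
`Y_t = m·(t-Θm)⁺ + σv·W_t`. -/
def obsDelta (m : ℝ) (Θm : Ω → ℝ) (σv : ℝ) (W : ℝ → Ω → ℝ) : ℝ → Ω → ℝ :=
  fun t ω => m * max (t - Θm ω) 0 + σv * W t ω

/-- The hitting time of level `a` by the Shiryaev filter `g_{m,ρ}` applied to the path of `Y`. -/
def tauHit (m σv ρ pit : ℝ) (Y : ℝ → Ω → ℝ) (a : ℝ) (ω : Ω) : ℝ :=
  hit (fun t => filter m σv ρ pit (fun s => Y s ω) t) a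

/-- The conditional probability process `Π̃_t = P(Θ ≤ t | F^Y_t)`. -/
def condProb [MeasurableSpace Ω] (P : Measure Ω) (Θ : Ω → ℝ) (Y : ℝ → Ω → ℝ)
    (t : ℝ) : Ω → ℝ :=
  P[(Set.indicator {ω | Θ ω ≤ t} fun _ => (1:ℝ)) | natFilt Y t]

/-- `W` is a standard Brownian motion (started at 0, continuous paths, centered Gaussian
increments of variance `t-s`, independent increments). -/
structure IsBM [MeasurableSpace Ω] (P : Measure Ω) (W : ℝ → Ω → ℝ) : Prop where
  meas : ∀ t, Measurable (W t)
  start : ∀ ω, W 0 ω = 0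
  cont : ∀ ω, Continuous fun t => W t ω
  gauss : ∀ s t : ℝ, 0 ≤ s → s ≤ t →
    P.map (fun ω => W t ω - W s ω) = gaussianReal 0 (Real.toNNReal (t - s))
  indep : ∀ (k : ℕ) (ts : ℕ → ℝ), Monotone ts → 0 ≤ ts 0 →
    iIndepFun
      (fun (i : Fin k) ω => W (ts (i + 1)) ω - W (ts i) ω) P

end QD

/-!
The numerator `N(t)` is a mixture of likelihood ratios `exp (l/σ² · (y t - y θ) - …)` with
nonnegative weights, and each of them grows with the increment `y t - y θ`. When `y₂ - y₁` is
nondecreasing, every increment of `y₂` over `[θ, t]` dominates that of `y₁`, and `y₁ t ≤ y₂ t`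
is the case `θ = 0`; so `N` grows, and so does `g = N / (N + c)` since `x ↦ x / (x + c)` is
nondecreasing on `[0, ∞)` for `c ≥ 0`. The second claim holds because `g(t)` only reads `y` on
`[0, t]`.
-/

theorem div_add_le_div_add {a b c : ℝ} (ha : 0 ≤ a) (hab : a ≤ b) (hc : 0 ≤ c) :
    a / (a + c) ≤ b / (b + c) := by
  rcases (add_nonneg ha hc).eq_or_lt with hac | hac
  · rw [← hac, div_zero]
    exact div_nonneg (ha.trans hab) (by linarith)
  · rw [div_le_div_iff₀ hac (by linarith)]
    nlinarith

namespace QD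

variable {m σv ρ pit : ℝ}

theorem filterN_nonneg (hρ : 0 ≤ ρ) (hpit : pit ∈ Icc (0 : ℝ) 1) (y : ℝ → ℝ) {t : ℝ}
    (ht : 0 ≤ t) : 0 ≤ filterN m σv ρ pit y t := by
  have hint : 0 ≤ ∫ θ in (0:ℝ)..t,
      exp (m / σv ^ 2 * (y t - y θ) - m ^ 2 / (2 * σv ^ 2) * (t - θ)) * (ρ * exp (-ρ * θ)) :=
    intervalIntegral.integral_nonneg ht fun θ _ => by positivity
  unfold filterN
  have := hpit.1
  have := sub_nonneg.2 hpit.2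
  positivity

theorem filterN_mono (hm : 0 ≤ m) (hρ : 0 ≤ ρ) (hpit : pit ∈ Icc (0 : ℝ) 1)
    {y₁ y₂ : ℝ → ℝ} (hy₁ : Continuous y₁) (hy₂ : Continuous y₂) (h0 : y₁ 0 ≤ y₂ 0)
    (hmono : MonotoneOn (fun t => y₂ t - y₁ t) (Ici 0)) {t : ℝ} (ht : 0 ≤ t) :
    filterN m σv ρ pit y₁ t ≤ filterN m σv ρ pit y₂ t := by
  have hincr : ∀ θ ∈ Icc 0 t, y₁ t - y₁ θ ≤ y₂ t - y₂ θ := fun θ hθ => by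
    have := hmono hθ.1 (mem_Ici.2 ht) hθ.2
    dsimp only at this
    linarith
  have hyt : y₁ t ≤ y₂ t := by
    have := hincr 0 ⟨le_rfl, ht⟩
    linarith
  have hκ : 0 ≤ m / σv ^ 2 := by positivity
  have hint : (∫ θ in (0:ℝ)..t,
      exp (m / σv ^ 2 * (y₁ t - y₁ θ) - m ^ 2 / (2 * σv ^ 2) * (t - θ)) * (ρ * exp (-ρ * θ))) ≤
      ∫ θ in (0:ℝ)..t,
      exp (m / σv ^ 2 * (y₂ t - y₂ θ) - m ^ 2 / (2 * σv ^ 2) * (t - θ)) * (ρ * exp (-ρ * θ)) :=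
    intervalIntegral.integral_mono_on ht (Continuous.intervalIntegrable (by fun_prop) _ _)
      (Continuous.intervalIntegrable (by fun_prop) _ _) fun θ hθ => by
        gcongr exp (_ * ?_ - _) * _
        exact hincr θ hθ
  unfold filterN
  have := hpit.1
  have := sub_nonneg.2 hpit.2
  gcongr

theorem filter_mono (hm : 0 ≤ m) (hρ : 0 ≤ ρ) (hpit : pit ∈ Icc (0 : ℝ) 1)
    {y₁ y₂ : ℝ → ℝ} (hy₁ : Continuous y₁) (hy₂ : Continuous y₂) (h0 : y₁ 0 ≤ y₂ 0)
    (hmono : MonotoneOn (fun t => y₂ t - y₁ t) (Ici 0)) {t : ℝ} (ht : 0 ≤ t) :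
    filter m σv ρ pit y₁ t ≤ filter m σv ρ pit y₂ t :=
  div_add_le_div_add (filterN_nonneg hρ hpit y₁ ht)
    (filterN_mono hm hρ hpit hy₁ hy₂ h0 hmono ht)
    (mul_nonneg (sub_nonneg.2 hpit.2) (exp_pos _).le)

theorem filterN_congr {y₁ y₂ : ℝ → ℝ} {t : ℝ} (h : EqOn y₁ y₂ (uIcc 0 t)) :
    filterN m σv ρ pit y₁ t = filterN m σv ρ pit y₂ t := by
  have hyt : y₁ t = y₂ t := h right_mem_uIcc
  unfold filterN
  rw [hyt]
  congr 2
  exact intervalIntegral.integral_congr fun θ hθ => by simp only [h hθ]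

theorem filter_congr {y₁ y₂ : ℝ → ℝ} {t : ℝ} (h : EqOn y₁ y₂ (uIcc 0 t)) :
    filter m σv ρ pit y₁ t = filter m σv ρ pit y₂ t := by
  rw [filter, filter, filterN_congr h]

end QD

theorem shiryaev_filter_mono_in_path_general (l σv ρ pit : ℝ)
    (hl : 0 < l) (hρ : 0 < ρ) (hpit : pit ∈ Set.Icc (0:ℝ) 1)
    (y₁ y₂ : ℝ → ℝ) (hy₁ : Continuous y₁) (hy₂ : Continuous y₂)
    (h0₁ : y₁ 0 = 0) (h0₂ : y₂ 0 = 0)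
    (hmono : MonotoneOn (fun t => y₂ t - y₁ t) (Set.Ici 0)) :
    (∀ t : ℝ, 0 ≤ t → QD.filter l σv ρ pit y₁ t ≤ QD.filter l σv ρ pit y₂ t)
      ∧ ∀ s : ℝ, (∀ u ∈ Set.Icc (0:ℝ) s, y₁ u = y₂ u) →
          ∀ t ∈ Set.Icc (0:ℝ) s, QD.filter l σv ρ pit y₁ t = QD.filter l σv ρ pit y₂ t := by
  refine ⟨fun t ht => QD.filter_mono hl.le hρ.le hpit hy₁ hy₂ (by rw [h0₁, h0₂]) hmono ht,
    fun s hs t ht => QD.filter_congr fun u hu => hs u ?_⟩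
  rw [uIcc_of_le ht.1] at hu
  exact ⟨hu.1, hu.2.trans ht.2⟩

/-- Pathwise monotonicity of the Shiryaev filter in the observation
path: if `y² - y¹` is nondecreasing on `[0,∞)` then `g_{l,ρ}(t,q̃,y¹) ≤ g_{l,ρ}(t,q̃,y²)`
for all `t ≥ 0`; and if `y¹ = y²` on `[0,s]` then the filters agree on `[0,s]`. -/
theorem shiryaev_filter_mono_in_path (l σv ρ pit : ℝ)
    (hl : 0 < l) (hσ : 0 < σv) (hρ : 0 < ρ) (hpit : pit ∈ Set.Icc (0:ℝ) 1)
    (y₁ y₂ : ℝ → ℝ) (hy₁ : Continuous y₁) (hy₂ : Continuous y₂)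
    (h0₁ : y₁ 0 = 0) (h0₂ : y₂ 0 = 0)
    (hmono : MonotoneOn (fun t => y₂ t - y₁ t) (Set.Ici 0)) :
    (∀ t : ℝ, 0 ≤ t → QD.filter l σv ρ pit y₁ t ≤ QD.filter l σv ρ pit y₂ t)
      ∧ ∀ s : ℝ, (∀ u ∈ Set.Icc (0:ℝ) s, y₁ u = y₂ u) →
          ∀ t ∈ Set.Icc (0:ℝ) s, QD.filter l σv ρ pit y₁ t = QD.filter l σv ρ pit y₂ t :=
  shiryaev_filter_mono_in_path_general l σv ρ pit hl hρ hpit y₁ y₂ hy₁ hy₂ h0₁ h0₂ hmono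

end
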